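/- arXiv:2603.08371 — 4 statements merged into one kernel-verified Lean document; each statement's English description precedes it below -/
import Mathlib

section
/- Under the generalized scaling law σ⁻¹(ṽ(θ,e)) = α(θ) + β(θ)·log(1+e) with β(θ) > 0 strictly increasing in θ and α(θ) weakly increasing in θ, the single-crossing condition C3 holds: for θ' > θ, the effort gap e_req(s; θ) − e_req(s; θ'), where e_req(s; θ) := inf{e ≥ 0 : ṽ(θ,e) ≥ s}, is weakly nondecreasing in the target score s (on the range of scores attainable from zero effort by both models). -/
/-!
Write `L = σ⁻¹(s)`. Once `s` is reachable at zero effort, the scaling law gives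
`e_req(s; θ) = exp ((L - α θ) / β θ) - 1`, so raising `s` adds
`exp x * (exp (Δ / β θ) - 1)` to the effort of `θ`, with `x = (L - α θ) / β θ` and
`Δ = L' - L ≥ 0`. Both `x` and `Δ / β θ` only shrink when `θ` is replaced by a `θ'`
with larger `α` and `β`, as long as `α θ' ≤ L`; hence the stronger model's effort grows
more slowly and the gap widens.
-/

/-- The standard logistic function `σ(x) = 1/(1+e^{-x})`. -/
noncomputable def logistic (x : ℝ) : ℝ := (1 + Real.exp (-x))⁻¹

/-- Minimal effort required for a model of capability `θ` to reach score `s`: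
`e_req(s;θ) = inf{e ≥ 0 : v(θ,e) ≥ s}`. -/
noncomputable def ereq (v : ℝ → ℝ → ℝ) (s θ : ℝ) : ℝ :=
  sInf {e | 0 ≤ e ∧ s ≤ v θ e}

open Real

lemma logistic_eq_sigmoid : logistic = sigmoid := rfl

lemma mem_range_logistic {t : ℝ} (h0 : 0 < t) (h1 : t < 1) : t ∈ Set.range logistic := by
  rw [logistic_eq_sigmoid, range_sigmoid]
  exact ⟨h0, h1⟩

lemma exp_sub_exp_le_exp_sub_exp {x y x₁ y₁ : ℝ} (hx : x ≤ x₁) (hxy : x ≤ y)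
    (hd : y - x ≤ y₁ - x₁) : exp y - exp x ≤ exp y₁ - exp x₁ := by
  have factor : ∀ u v : ℝ, exp v - exp u = exp u * (exp (v - u) - 1) := fun u v => by
    rw [mul_sub, ← exp_add, add_sub_cancel, mul_one]
  rw [factor x y, factor x₁ y₁]
  gcongr
  · exact sub_nonneg.2 (one_le_exp (sub_nonneg.2 hxy))

lemma exp_sub_div_increment_le {a a' b b' L L' : ℝ} (hb : 0 < b) (hbb' : b ≤ b')
    (haa' : a ≤ a') (ha'L : a' ≤ L) (hLL' : L ≤ L') :
    exp ((L' - a') / b') - exp ((L - a') / b') ≤ exp ((L' - a) / b) - exp ((L - a) / b) := by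
  have hb' : 0 < b' := hb.trans_le hbb'
  refine exp_sub_exp_le_exp_sub_exp ?_ (by gcongr) ?_
  · exact div_le_div₀ (by linarith) (by linarith) hb hbb'
  · simp only [← sub_div, sub_sub_sub_cancel_right]
    exact div_le_div_of_nonneg_left (sub_nonneg.2 hLL') hb hbb'

section ScalingLaw

variable {α β : ℝ → ℝ} {vt : ℝ → ℝ → ℝ}

lemma vt_zero_eq_logistic (hvt : ∀ θ e, vt θ e = logistic (α θ + β θ * log (1 + e))) (θ : ℝ) :
    vt θ 0 = logistic (α θ) := by
  simp [hvt]

lemma ereq_eq_of_logistic_eq (hvt : ∀ θ e, vt θ e = logistic (α θ + β θ * log (1 + e)))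
    {θ s L : ℝ} (hβ : 0 < β θ) (hL : logistic L = s) (hαL : α θ ≤ L) :
    ereq vt s θ = exp ((L - α θ) / β θ) - 1 := by
  set e₀ := exp ((L - α θ) / β θ) - 1
  have he₀ : 0 ≤ e₀ := sub_nonneg.2 (one_le_exp (div_nonneg (sub_nonneg.2 hαL) hβ.le))
  suffices {e | 0 ≤ e ∧ s ≤ vt θ e} = Set.Ici e₀ by rw [ereq, this, csInf_Ici]
  ext e
  simp only [Set.mem_ofPred_eq, Set.mem_Ici, hvt, ← hL, logistic_eq_sigmoid, sigmoid_le_iff]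
  have key (he : 0 ≤ e) : L ≤ α θ + β θ * log (1 + e) ↔ e₀ ≤ e := by
    rw [← sub_le_iff_le_add', ← div_le_iff₀' hβ, le_log_iff_exp_le (by linarith),
      ← sub_le_iff_le_add']
  exact ⟨fun ⟨he, h⟩ => (key he).1 h, fun h => ⟨he₀.trans h, (key (he₀.trans h)).2 h⟩⟩

end ScalingLaw

/-- Under the generalized scaling law
`σ⁻¹(ṽ(θ,e)) = α(θ) + β(θ)·log(1+e)` with `β > 0` strictly increasing and `α`
weakly increasing, the single-crossing condition C3 holds: for `θ < θ'`, the
effort gap `e_req(s;θ) − e_req(s;θ')` is weakly nondecreasing in the target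
score `s`, on the range of scores attainable from zero effort by both models. -/
theorem stmt3 (α β : ℝ → ℝ) (hα : Monotone α) (hβ : StrictMono β)
    (hβpos : ∀ θ, 0 < β θ)
    (vt : ℝ → ℝ → ℝ)
    (hvt : ∀ θ e, vt θ e = logistic (α θ + β θ * Real.log (1 + e)))
    (θ θ' : ℝ) (hθ : θ < θ') :
    ∀ s s', vt θ 0 ≤ s → vt θ' 0 ≤ s → s ≤ s' → s' < 1 →
      ereq vt s θ - ereq vt s θ' ≤ ereq vt s' θ - ereq vt s' θ' := by
  intro s s' hs hs' hss' hs'1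
  rw [vt_zero_eq_logistic hvt] at hs hs'
  have hs0 : 0 < s := (sigmoid_pos _).trans_le hs
  obtain ⟨L, rfl⟩ := mem_range_logistic hs0 (hss'.trans_lt hs'1)
  obtain ⟨L', rfl⟩ := mem_range_logistic (hs0.trans_le hss') hs'1
  simp only [logistic_eq_sigmoid, sigmoid_le_iff] at hs' hss'
  have hαθ : α θ ≤ α θ' := hα hθ.le
  rw [ereq_eq_of_logistic_eq hvt (hβpos θ) rfl (hαθ.trans hs'),
    ereq_eq_of_logistic_eq hvt (hβpos θ') rfl hs',
    ereq_eq_of_logistic_eq hvt (hβpos θ) rfl (hαθ.trans (hs'.trans hss')),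
    ereq_eq_of_logistic_eq hvt (hβpos θ') rfl (hs'.trans hss')]
  linarith [exp_sub_div_increment_le (hβpos θ) (hβ hθ).le hαθ hs' hss']
end

section
/- Fix a tune-before-test level Δ ≥ 0 and suppose the cost function c is nondecreasing and convex with c(0)=0, and the score function v satisfies C1 (strictly increasing in θ), C2 (nondecreasing, concave, saturating in e), and C3 (non-decreasing effort gaps), and rank rewards R₁ ≥ R₂ ≥ ⋯ ≥ Rₙ with strict decrease where relevant. If e* is a pure-strategy Nash equilibrium of the induced follower game, then for all i, j with θᵢ > θⱼ, the equilibrium post-effort scores satisfy v(θᵢ, Δ + eᵢ*) ≥ v(θⱼ, Δ + eⱼ*). That is, equilibrium scores preserve the latent capability ordering up to ties. -/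
/-!
Suppose a stronger agent `i` scores strictly below a weaker agent `j`. Let `x` be the least
effort with which `i` would match `j`'s score and `y` the least effort with which `j` would match
`i`'s. Condition C3 on effort gaps gives `x ≤ eⱼ` and `x + y ≤ eᵢ + eⱼ`. Stability against both
deviations, together with the strict reward drop at `i`'s rank, forces `c eᵢ < c x` and
`c eᵢ + c eⱼ < c x + c y`. Hence `eᵢ < x ≤ eⱼ`, and since `(x, eᵢ + eⱼ - x)` is majorized by
`(eᵢ, eⱼ)`, convexity and monotonicity of `c` give the opposite inequality.
-/

open Finset Function

theorem ConvexOn.map_add_map_sub_le {s : Set ℝ} {f : ℝ → ℝ} (hf : ConvexOn ℝ s f) {a b x : ℝ}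
    (ha : a ∈ s) (hb : b ∈ s) (hax : a ≤ x) (hxb : x ≤ b) :
    f x + f (a + b - x) ≤ f a + f b := by
  obtain rfl | hab := (hax.trans hxb).eq_or_lt
  · obtain rfl : x = a := le_antisymm hxb hax
    simp
  set t := (x - a) / (b - a)
  have ht0 : 0 ≤ t := div_nonneg (by linarith) (by linarith)
  have ht1 : t ≤ 1 := div_le_one_of_le₀ (by linarith) (by linarith)
  have hx : (1 - t) • a + t • b = x := by
    simp only [smul_eq_mul, t]; field_simp; ring
  have hx' : t • a + (1 - t) • b = a + b - x := by
    simp only [smul_eq_mul, t]; field_simp; ring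
  have h₁ := hf.2 ha hb (sub_nonneg.2 ht1) ht0 (sub_add_cancel 1 t)
  have h₂ := hf.2 ha hb ht0 (sub_nonneg.2 ht1) (add_sub_cancel t 1)
  rw [hx] at h₁
  rw [hx'] at h₂
  simp only [smul_eq_mul] at h₁ h₂
  linarith

theorem max_sub_max_le_max_sub_max {a b c d D : ℝ} (hba : b ≤ a) (hbd : b ≤ d)
    (h : a - b ≤ c - d) : max a D - max b D ≤ max c D - max d D := by
  rcases max_cases a D with ⟨e1, f1⟩ | ⟨e1, f1⟩ <;>
  rcases max_cases b D with ⟨e2, f2⟩ | ⟨e2, f2⟩ <;>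
  rcases max_cases c D with ⟨e3, f3⟩ | ⟨e3, f3⟩ <;>
  rcases max_cases d D with ⟨e4, f4⟩ | ⟨e4, f4⟩ <;>
  rw [e1, e2, e3, e4] <;> linarith

-- Measured in total training `Δ + e`, the coordinate in which C3 is stated.
noncomputable def minEffort (u : ℝ → ℝ) (s : ℝ) : ℝ := sInf {e | 0 ≤ e ∧ s ≤ u e}

section minEffort

variable {u u' : ℝ → ℝ} {s s' w : ℝ}

theorem minEffort_le (hw : 0 ≤ w) (hs : s ≤ u w) : minEffort u s ≤ w :=
  csInf_le ⟨0, fun _ he => he.1⟩ ⟨hw, hs⟩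

theorem minEffort_le_minEffort (hw : 0 ≤ w) (hs' : s' ≤ u' w) (h : ∀ e, s' ≤ u' e → s ≤ u e) :
    minEffort u s ≤ minEffort u' s' :=
  csInf_le_csInf ⟨0, fun _ he => he.1⟩ ⟨w, hw, hs'⟩ fun e he => ⟨he.1, h e he.2⟩

theorem le_apply_minEffort (hu : Continuous u) (hw : 0 ≤ w) (hs : s ≤ u w) :
    s ≤ u (minEffort u s) :=
  ((isClosed_le continuous_const continuous_id).inter (isClosed_le continuous_const hu)).csInf_mem
    ⟨w, hw, hs⟩ ⟨0, fun _ he => he.1⟩ |>.2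

theorem exists_catchUp_efforts (hu : Continuous u) (hu' : Continuous u') (hum : Monotone u)
    (hum' : Monotone u') (hle : ∀ e, u e ≤ u' e) {Δ a b : ℝ} (hΔ : 0 ≤ Δ) (ha : 0 ≤ a)
    (hb : 0 ≤ b) (hlt : u' (Δ + a) < u (Δ + b))
    (hgap : minEffort u (u' (Δ + a)) - minEffort u' (u' (Δ + a)) ≤
      minEffort u (u (Δ + b)) - minEffort u' (u (Δ + b))) :
    ∃ x y, 0 ≤ x ∧ 0 ≤ y ∧ u (Δ + b) ≤ u' (Δ + x) ∧ u' (Δ + a) ≤ u (Δ + y) ∧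
      x ≤ b ∧ x + y ≤ a + b := by
  set p := u' (Δ + a)
  set q := u (Δ + b)
  have hpa : 0 ≤ Δ + a := by linarith
  have hqb : 0 ≤ Δ + b := by linarith
  have h₁ : minEffort u' p ≤ Δ + a := minEffort_le hpa le_rfl
  have h₂ : minEffort u q ≤ Δ + b := minEffort_le hqb le_rfl
  have h₃ : minEffort u' p ≤ minEffort u p :=
    minEffort_le_minEffort hqb hlt.le fun e he => he.trans (hle e)
  have h₄ : minEffort u' p ≤ minEffort u' q :=
    minEffort_le_minEffort hqb (hle _) fun e he => hlt.le.trans he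
  have h₅ : minEffort u' q ≤ minEffort u q :=
    minEffort_le_minEffort hqb le_rfl fun e he => he.trans (hle e)
  -- training up to `Δ` comes for free, hence efforts of the form `max m Δ - Δ`
  refine ⟨max (minEffort u' q) Δ - Δ, max (minEffort u p) Δ - Δ, by simp, by simp, ?_, ?_, ?_, ?_⟩
  · rw [add_sub_cancel]
    exact (le_apply_minEffort hu' hqb (hle _)).trans (hum' (le_max_left _ _))
  · rw [add_sub_cancel]
    exact (le_apply_minEffort hu hqb hlt.le).trans (hum (le_max_left _ _))
  · linarith [max_le (h₅.trans h₂) (le_add_of_nonneg_right hb)]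
  · linarith [max_sub_max_le_max_sub_max h₃ h₄ hgap (D := Δ),
      max_le h₁ (le_add_of_nonneg_right ha), max_le h₂ (le_add_of_nonneg_right hb)]

end minEffort

section RankGame

variable {ι : Type*} [Fintype ι]

noncomputable def outscoring (f : ι → ℝ → ℝ) (e : ι → ℝ) (s : ℝ) : Finset ι :=
  univ.filter fun j => s < f j (e j)

-- `f k e` is agent `k`'s score at effort `e`;
-- agent `i`'s rank is `1 + #(outscoring f e (f i (e i)))`.
def IsRankNash [DecidableEq ι] (f : ι → ℝ → ℝ) (c : ℝ → ℝ) (R : ℕ → ℝ) (e : ι → ℝ) : Prop :=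
  ∀ i x, 0 ≤ x → R (1 + #(outscoring f (update e i x) (f i x))) - c x ≤
    R (1 + #(outscoring f e (f i (e i)))) - c (e i)

variable {f : ι → ℝ → ℝ} {e : ι → ℝ}

@[simp]
theorem mem_outscoring {s : ℝ} {j : ι} : j ∈ outscoring f e s ↔ s < f j (e j) := by
  simp [outscoring]

theorem outscoring_update_subset [DecidableEq ι] {i : ι} {x s : ℝ} (hs : s ≤ f i x) :
    outscoring f (update e i x) (f i x) ⊆ (outscoring f e s).erase i := by
  intro l hl
  simp only [mem_outscoring, mem_erase] at hl ⊢
  obtain rfl | hli := eq_or_ne l i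
  · simp at hl
  · rw [update_of_ne hli] at hl
    exact ⟨hli, hs.trans_lt hl⟩

theorem card_outscoring_lt_card (i : ι) : #(outscoring f e (f i (e i))) < Fintype.card ι :=
  card_lt_univ_of_notMem (x := i) (by simp)

theorem card_outscoring_add_one_le [DecidableEq ι] {i j : ι} (hlt : f i (e i) < f j (e j)) :
    #(outscoring f e (f j (e j))) + 1 ≤ #(outscoring f e (f i (e i))) := by
  have hj : j ∈ outscoring f e (f i (e i)) := mem_outscoring.2 hlt
  -- `e` is its own deviation of `j` to `e j`
  have := card_le_card (update_eq_self j e ▸ outscoring_update_subset (e := e) hlt.le)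
  rw [card_erase_of_mem hj] at this
  have := card_pos.2 ⟨j, hj⟩
  omega

theorem IsRankNash.cost_lt_of_lt [DecidableEq ι] {c : ℝ → ℝ} {R : ℕ → ℝ}
    (hN : IsRankNash f c R e) (hR : Antitone R)
    (hRstrict : ∀ k, 1 ≤ k → k < Fintype.card ι → R (k + 1) < R k) {i j : ι} (hlt : f i (e i) < f j (e j)) {x y : ℝ} (hx : 0 ≤ x) (hy : 0 ≤ y)
    (hfx : f j (e j) ≤ f i x) (hfy : f i (e i) ≤ f j y) :
    c (e i) < c x ∧ c (e i) + c (e j) < c x + c y := by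
  set A := #(outscoring f e (f i (e i)))
  set B := #(outscoring f e (f j (e j)))
  have hBA : B + 1 ≤ A := card_outscoring_add_one_le hlt
  have hj : j ∈ outscoring f e (f i (e i)) := mem_outscoring.2 hlt
  have hdev_i : R (1 + B) - c x ≤ R (1 + A) - c (e i) := by
    refine le_trans (sub_le_sub_right (hR ?_) _) (hN i x hx)
    have := card_le_card ((outscoring_update_subset (e := e) hfx).trans (erase_subset i _))
    omega
  have hdev_j : R A - c y ≤ R (1 + B) - c (e j) := by
    refine le_trans (sub_le_sub_right (hR ?_) _) (hN j y hy)
    have := card_le_card (outscoring_update_subset (e := e) hfy)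
    rw [card_erase_of_mem hj] at this
    omega
  have hstep : R (A + 1) < R A := hRstrict A (by omega) (card_outscoring_lt_card i)
  have hAB : R A ≤ R (1 + B) := hR (by omega)
  rw [add_comm] at hstep
  constructor <;> linarith
end RankGame

theorem stmt4_general {n : ℕ} (θ : Fin n → ℝ) (v : ℝ → ℝ → ℝ) (c : ℝ → ℝ) (R : ℕ → ℝ)
    (Δ : ℝ) (hΔ : 0 ≤ Δ)
    (hcmono : Monotone c) (hcconv : ConvexOn ℝ (Set.Ici 0) c)
    (hvcont : ∀ t, Continuous (v t))
    (hC1 : ∀ e t t', t < t' → v t e < v t' e)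
    (hC2mono : ∀ t, Monotone (v t))
    (hC3 : ∀ t t', t < t' → ∀ s s', s ≤ s' →
      sInf {e | 0 ≤ e ∧ s ≤ v t e} - sInf {e | 0 ≤ e ∧ s ≤ v t' e} ≤
      sInf {e | 0 ≤ e ∧ s' ≤ v t e} - sInf {e | 0 ≤ e ∧ s' ≤ v t' e})
    (hR : Antitone R)
    (hRstrict : ∀ k, 1 ≤ k → k < n → R (k + 1) < R k)
    (estar : Fin n → ℝ) (hnn : ∀ i, 0 ≤ estar i)
    (hPNE : ∀ i : Fin n, ∀ x, 0 ≤ x →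
      R (1 + (Finset.univ.filter (fun j =>
          v (θ i) (Δ + x) < v (θ j) (Δ + Function.update estar i x j))).card) - c x ≤
      R (1 + (Finset.univ.filter (fun j =>
          v (θ i) (Δ + estar i) < v (θ j) (Δ + estar j))).card) - c (estar i)) :
    ∀ i j, θ j < θ i → v (θ j) (Δ + estar j) ≤ v (θ i) (Δ + estar i) := by
  intro i j hij
  by_contra! hlt
  have hN : IsRankNash (fun k e => v (θ k) (Δ + e)) c R estar := hPNE
  obtain ⟨x, y, hx, hy, hfx, hfy, hxj, hxy⟩ :=
    exists_catchUp_efforts (hvcont _) (hvcont _) (hC2mono _) (hC2mono _)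
      (fun e => (hC1 e _ _ hij).le) hΔ (hnn i) (hnn j) hlt (hC3 _ _ hij _ _ hlt.le)
  obtain ⟨hcx, hcxy⟩ := hN.cost_lt_of_lt hR (by simpa using hRstrict) hlt hx hy hfx hfy
  have hix : estar i ≤ x := (hcmono.reflect_lt hcx).le
  have hexchange := hcconv.map_add_map_sub_le (hnn i) (hnn j) hix hxj
  have hcy : c y ≤ c (estar i + estar j - x) := hcmono (by linarith)
  linarith

/-- Order preservation at equilibrium. Fix a tune-before-test level
`Δ ≥ 0`. Under a nondecreasing convex cost with `c(0)=0`, a score function `v`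
satisfying C1 (strictly increasing in capability), C2 (nondecreasing, concave,
saturating in effort) and C3 (non-decreasing effort gaps), and monotone rank
rewards (with strict decrease where relevant), every pure-strategy Nash
equilibrium `e*` of the induced follower game has capability-ordered scores:
`θᵢ > θⱼ` implies `v(θᵢ, Δ + eᵢ*) ≥ v(θⱼ, Δ + eⱼ*)`.
Ranks are 1-indexed: `rank(i) = 1 + #{j : vⱼ > vᵢ}`, and agent `i`'s utility is
`R(rank(i)) − c(eᵢ)`. -/
theorem stmt4 {n : ℕ} (θ : Fin n → ℝ) (v : ℝ → ℝ → ℝ) (c : ℝ → ℝ) (R : ℕ → ℝ)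
    (Δ : ℝ) (hΔ : 0 ≤ Δ)
    (hθ : StrictAnti θ)
    (hcmono : Monotone c) (hcconv : ConvexOn ℝ (Set.Ici 0) c) (hc0 : c 0 = 0)
    (hvcont : ∀ t, Continuous (v t))
    (hC1 : ∀ e t t', t < t' → v t e < v t' e)
    (hC2mono : ∀ t, Monotone (v t))
    (hC2conc : ∀ t, ConcaveOn ℝ (Set.Ici 0) (v t))
    (hC2sat : ∀ t, ∃ L, Filter.Tendsto (v t) Filter.atTop (nhds L))
    (hC3 : ∀ t t', t < t' → ∀ s s', s ≤ s' →
      sInf {e | 0 ≤ e ∧ s ≤ v t e} - sInf {e | 0 ≤ e ∧ s ≤ v t' e} ≤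
      sInf {e | 0 ≤ e ∧ s' ≤ v t e} - sInf {e | 0 ≤ e ∧ s' ≤ v t' e})
    (hR : Antitone R)
    (hRstrict : ∀ k, 1 ≤ k → k < n → R (k + 1) < R k)
    (estar : Fin n → ℝ) (hnn : ∀ i, 0 ≤ estar i)
    (hPNE : ∀ i : Fin n, ∀ x, 0 ≤ x →
      R (1 + (Finset.univ.filter (fun j =>
          v (θ i) (Δ + x) < v (θ j) (Δ + Function.update estar i x j))).card) - c x ≤
      R (1 + (Finset.univ.filter (fun j =>
          v (θ i) (Δ + estar i) < v (θ j) (Δ + estar j))).card) - c (estar i)) :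
    ∀ i j, θ j < θ i → v (θ j) (Δ + estar j) ≤ v (θ i) (Δ + estar i) :=
  stmt4_general θ v c R Δ hΔ hcmono hcconv hvcont hC1 hC2mono hC3 hR hRstrict estar hnn hPNE
end

section
/- Let 0 ≤ Δ₁ ≤ Δ₂ be two tune-before-test levels. If the all-zero effort profile is a pure-strategy Nash equilibrium of the follower game induced by Δ₁, then it is also a pure-strategy Nash equilibrium of the follower game induced by Δ₂. -/
/-!
Writing `E_t(σ)` for the least effort with which type `t` reaches score `σ`, condition C3 says
that the effort gap `E_t(σ) - E_{t'}(σ)` between types `t < t'` is nondecreasing in `σ`.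
Suppose a lower type `t`, deviating with effort `x`, catches up with `t'` at level `Δ₂`, i.e.
`E_t(v t' Δ₂) ≤ Δ₂ + x`. Then `E_{t'}(v t' Δ₂) = Δ₂`, so the gap at `v t' Δ₂` is at
most `x`; by C3 the gap at the lower score `v t' Δ₁` is at most `x` as well, and `t` catches up
with `t'` at level `Δ₁`. Hence a deviation that does not pay at `Δ₁` passes at most as many
competitors at `Δ₂`, while zero-effort ranks do not depend on the level.

The equality `E_{t'}(v t' Δ) = Δ` says that `v t'` is not flat just below `Δ`. If it were flat on
an interval of length `δ > 0`, C3 applied to `t'` and an intermediate type `w`, at the score `s'`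
of the flat piece and a slightly higher score, would force `E_w(s') ≤ E_u(s') - δ` for all
`t ≤ u < w < t'`; iterating along a chain of types in `[t, t')` drives `E(s')` below zero.
-/

/-- The all-zero additional-effort profile is a pure-strategy Nash equilibrium
of the follower game induced by TbT level `Δ` (0-indexed ranks
`rank(i) = #{j : vⱼ > vᵢ}`, utility `R(rank(i)) − c(eᵢ)`). -/
def zeroIsPNE {n : ℕ} (θ : Fin n → ℝ) (v : ℝ → ℝ → ℝ) (c : ℝ → ℝ) (R : ℕ → ℝ)
    (Δ : ℝ) : Prop :=
  ∀ i : Fin n, ∀ x, 0 ≤ x →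
    R ((Finset.univ.filter (fun j =>
        v (θ i) (Δ + x) < v (θ j) (Δ + Function.update (fun _ => (0:ℝ)) i x j))).card)
      - c x ≤
    R ((Finset.univ.filter (fun j => v (θ i) Δ < v (θ j) Δ)).card) - c 0

open Finset

/-- The paper's `e^req`; it is `0` when `σ` is out of reach, as `sInf ∅ = 0`. -/
noncomputable def requiredEffort (v : ℝ → ℝ → ℝ) (t σ : ℝ) : ℝ :=
  sInf {e | 0 ≤ e ∧ σ ≤ v t e}

section Score

variable {v : ℝ → ℝ → ℝ}

section

variable {t σ e : ℝ}

lemma requiredEffort_nonneg : 0 ≤ requiredEffort v t σ :=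
  Real.sInf_nonneg fun _ he => he.1

lemma requiredEffort_le (he : 0 ≤ e) (h : σ ≤ v t e) : requiredEffort v t σ ≤ e :=
  csInf_le ⟨0, fun _ he => he.1⟩ ⟨he, h⟩

lemma le_requiredEffort {a : ℝ} (hreach : ∃ e, 0 ≤ e ∧ σ ≤ v t e)
    (h : ∀ e, 0 ≤ e → σ ≤ v t e → a ≤ e) : a ≤ requiredEffort v t σ :=
  le_csInf hreach fun e he => h e he.1 he.2

lemma le_apply_requiredEffort (hcont : Continuous (v t))
    (hreach : ∃ e, 0 ≤ e ∧ σ ≤ v t e) :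
    σ ≤ v t (requiredEffort v t σ) :=
  ((isClosed_Ici.inter (isClosed_Ici.preimage hcont)).csInf_mem hreach
    ⟨0, fun _ he => he.1⟩).2

end

/-- Continuity and the paper's conditions C1–C3 on the score `v t e` of type `t` at effort `e`. -/
structure ScoreConditions (v : ℝ → ℝ → ℝ) : Prop where
  continuous : ∀ t, Continuous (v t)
  strictMono_type : ∀ e, StrictMono fun t => v t e
  monotone_effort : ∀ t, Monotone (v t)
  effortGap_mono : ∀ t t', t < t' → ∀ s s', s ≤ s' →
    requiredEffort v t s - requiredEffort v t' s ≤ requiredEffort v t s' - requiredEffort v t' s'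

lemma requiredEffort_le_sub_of_lt_of_lt (hv : ScoreConditions v) {u w t' Δ : ℝ}
    (huw : u < w) (hwt' : w < t') (hreach : ∃ e, 0 ≤ e ∧ v t' Δ ≤ v u e) :
    requiredEffort v w (v t' Δ) ≤
      requiredEffort v u (v t' Δ) - (Δ - requiredEffort v t' (v t' Δ)) := by
  set A := requiredEffort v u (v t' Δ)
  have hA : v t' Δ ≤ v u A := le_apply_requiredEffort (hv.continuous u) hreach
  have hσ : v t' Δ < v w A := hA.trans_lt (hv.strictMono_type A huw)
  have hw : requiredEffort v w (v w A) ≤ A := requiredEffort_le requiredEffort_nonneg le_rfl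
  -- `v t' ≤ v t' Δ < v w A` on `[0, Δ)`, so `t'` needs at least `Δ` to reach `v w A`
  have ht' : Δ ≤ requiredEffort v t' (v w A) := by
    refine le_requiredEffort
      ⟨A, requiredEffort_nonneg, (hv.strictMono_type A hwt').le⟩ fun e _ he => ?_
    by_contra! hlt
    exact (hσ.trans_le he).not_ge (hv.monotone_effort t' hlt.le)
  linarith [hv.effortGap_mono w t' hwt' _ _ hσ.le]

lemma requiredEffort_apply_self (hv : ScoreConditions v) {t t' Δ : ℝ}
    (htt' : t < t') (hΔ : 0 ≤ Δ) (hreach : ∃ e, 0 ≤ e ∧ v t' Δ ≤ v t e) :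
    requiredEffort v t' (v t' Δ) = Δ := by
  refine le_antisymm (requiredEffort_le hΔ le_rfl) (not_lt.1 fun hlt => ?_)
  set s' := v t' Δ
  set δ := Δ - requiredEffort v t' s'
  have hδ : 0 < δ := sub_pos.2 hlt
  have hchain : ∀ k : ℕ, ∃ u, t ≤ u ∧ u < t' ∧
      requiredEffort v u s' ≤ requiredEffort v t s' - k * δ := by
    intro k
    induction k with
    | zero => exact ⟨t, le_rfl, htt', by simp⟩
    | succ k ih =>
      obtain ⟨u, htu, hut', hu⟩ := ih
      obtain ⟨e, he, hs'⟩ := hreach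
      have hstep := requiredEffort_le_sub_of_lt_of_lt hv
        (left_lt_add_div_two.2 hut') (add_div_two_lt_right.2 hut')
        ⟨e, he, hs'.trans ((hv.strictMono_type e).monotone htu)⟩
      refine ⟨(u + t') / 2, htu.trans (left_lt_add_div_two.2 hut').le,
        add_div_two_lt_right.2 hut', ?_⟩
      push_cast
      linarith
  obtain ⟨N, hN⟩ := exists_nat_gt (requiredEffort v t s' / δ)
  obtain ⟨u, -, -, hu⟩ := hchain N
  have := (div_lt_iff₀ hδ).1 hN
  linarith [requiredEffort_nonneg (v := v) (t := u) (σ := s')]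

lemma behind_of_behind_of_le (hv : ScoreConditions v) {t t' Δ₁ Δ₂ x : ℝ}
    (hx : 0 ≤ x) (hΔ₁ : 0 ≤ Δ₁) (hΔ : Δ₁ ≤ Δ₂)
    (hahead : v t (Δ₁ + x) < v t' Δ₁) : v t (Δ₂ + x) < v t' Δ₂ := by
  by_contra! hcatch
  have htt' : t < t' := (hv.strictMono_type (Δ₁ + x)).lt_iff_lt.1
    (hahead.trans_le (hv.monotone_effort t' (le_add_of_nonneg_right hx)))
  have hΔ₂ : 0 ≤ Δ₂ := hΔ₁.trans hΔ
  have hreach : ∃ e, 0 ≤ e ∧ v t' Δ₁ ≤ v t e :=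
    ⟨Δ₂ + x, by positivity, (hv.monotone_effort t' hΔ).trans hcatch⟩
  have hgap : requiredEffort v t (v t' Δ₁) ≤ Δ₁ + x := by
    have h₁ : requiredEffort v t' (v t' Δ₁) ≤ Δ₁ := requiredEffort_le hΔ₁ le_rfl
    have h₂ : requiredEffort v t (v t' Δ₂) ≤ Δ₂ + x :=
      requiredEffort_le (by positivity) hcatch
    have h₃ := requiredEffort_apply_self hv htt' hΔ₂
      ⟨Δ₂ + x, by positivity, hcatch⟩
    linarith [hv.effortGap_mono t t' htt' _ _ (hv.monotone_effort t' hΔ)]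
  exact hahead.not_ge
    ((le_apply_requiredEffort (hv.continuous t) hreach).trans (hv.monotone_effort t hgap))

end Score

lemma filter_lt_update_zero {n : ℕ} (θ : Fin n → ℝ) (v : ℝ → ℝ → ℝ)
    {i : Fin n} {x : ℝ}
    (hmono : Monotone (v (θ i))) (hx : 0 ≤ x) (Δ : ℝ) :
    univ.filter (fun j =>
        v (θ i) (Δ + x) < v (θ j) (Δ + Function.update (fun _ => (0:ℝ)) i x j)) =
      univ.filter (fun j => v (θ i) (Δ + x) < v (θ j) Δ) := by
  ext j
  simp only [mem_filter, mem_univ, true_and]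
  rcases eq_or_ne j i with rfl | hne
  · simp only [Function.update_self, lt_self_iff_false, false_iff, not_lt]
    exact hmono (le_add_of_nonneg_right hx)
  · rw [Function.update_of_ne hne, add_zero]

theorem stmt8_general {n : ℕ} (θ : Fin n → ℝ) (v : ℝ → ℝ → ℝ) (c : ℝ → ℝ) (R : ℕ → ℝ)
    (Δ₁ Δ₂ : ℝ) (hΔ₁ : 0 ≤ Δ₁) (hΔ : Δ₁ ≤ Δ₂)
    (hvcont : ∀ t, Continuous (v t))
    (hC1 : ∀ e t t', t < t' → v t e < v t' e)
    (hC2mono : ∀ t, Monotone (v t))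
    (hC3 : ∀ t t', t < t' → ∀ s s', s ≤ s' →
      sInf {e | 0 ≤ e ∧ s ≤ v t e} - sInf {e | 0 ≤ e ∧ s ≤ v t' e} ≤
      sInf {e | 0 ≤ e ∧ s' ≤ v t e} - sInf {e | 0 ≤ e ∧ s' ≤ v t' e})
    (hR : Antitone R)
    (h1 : zeroIsPNE θ v c R Δ₁) :
    zeroIsPNE θ v c R Δ₂ := by
  have hv : ScoreConditions v := ⟨hvcont, fun e _ _ h => hC1 e _ _ h, hC2mono, hC3⟩
  intro i x hx
  have hzero : ∀ Δ, univ.filter (fun j => v (θ i) Δ < v (θ j) Δ) =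
      univ.filter (fun j => θ i < θ j) := fun Δ =>
    filter_congr fun j _ => (hv.strictMono_type Δ).lt_iff_lt
  have hpassed : (univ.filter fun j => v (θ i) (Δ₁ + x) < v (θ j) Δ₁) ⊆
      univ.filter fun j => v (θ i) (Δ₂ + x) < v (θ j) Δ₂ :=
    monotone_filter_right _ fun j _ => behind_of_behind_of_le hv hx hΔ₁ hΔ
  have h := h1 i x hx
  rw [filter_lt_update_zero θ v (hC2mono _) hx, hzero] at h ⊢
  linarith [hR (card_le_card hpassed)]

/-- Monotone stabilizing effect of TbT. For TbT levels
`0 ≤ Δ₁ ≤ Δ₂`, if the all-zero effort profile is a pure-strategy Nash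
equilibrium of the follower game induced by `Δ₁`, then it is also a
pure-strategy Nash equilibrium of the follower game induced by `Δ₂`. -/
theorem stmt8 {n : ℕ} (θ : Fin n → ℝ) (v : ℝ → ℝ → ℝ) (c : ℝ → ℝ) (R : ℕ → ℝ)
    (Δ₁ Δ₂ : ℝ) (hΔ₁ : 0 ≤ Δ₁) (hΔ : Δ₁ ≤ Δ₂)
    (hθ : StrictAnti θ)
    (hcmono : Monotone c) (hcconv : ConvexOn ℝ (Set.Ici 0) c) (hc0 : c 0 = 0)
    (hvcont : ∀ t, Continuous (v t))
    (hC1 : ∀ e t t', t < t' → v t e < v t' e)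
    (hC2mono : ∀ t, Monotone (v t))
    (hC3 : ∀ t t', t < t' → ∀ s s', s ≤ s' →
      sInf {e | 0 ≤ e ∧ s ≤ v t e} - sInf {e | 0 ≤ e ∧ s ≤ v t' e} ≤
      sInf {e | 0 ≤ e ∧ s' ≤ v t e} - sInf {e | 0 ≤ e ∧ s' ≤ v t' e})
    (hR : Antitone R)
    (h1 : zeroIsPNE θ v c R Δ₁) :
    zeroIsPNE θ v c R Δ₂ :=
  stmt8_general θ v c R Δ₁ Δ₂ hΔ₁ hΔ hvcont hC1 hC2mono hC3 hR h1
end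

section
/- Let v satisfy C3 (for θ' > θ, the map s ↦ e_req(s;θ) − e_req(s;θ') is weakly nondecreasing) and let c be nondecreasing and convex. Suppose θᵢ > θⱼ, efforts eᵢ*, eⱼ* give scores vᵢ* := v(θᵢ, eᵢ*) < vⱼ* := v(θⱼ, eⱼ*), and define the counterfactual efforts ẽᵢ := e_req(vⱼ*; θᵢ) and ẽⱼ := e_req(vᵢ*; θⱼ), so that ẽᵢ > eᵢ* and ẽⱼ ≤ eⱼ*. Then ẽᵢ − eᵢ* ≤ eⱼ* − ẽⱼ, and consequently c(ẽᵢ) − c(eᵢ*) ≤ c(eⱼ*) − c(ẽⱼ). -/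
open Set

lemma ConvexOn.map_add_sub_map_le {𝕜 : Type*} [Field 𝕜] [LinearOrder 𝕜] [IsStrictOrderedRing 𝕜]
    {s : Set 𝕜} {f : 𝕜 → 𝕜} (hf : ConvexOn 𝕜 s f) {a b t : 𝕜} (ha : a ∈ s) (hbt : b + t ∈ s)
    (hab : a ≤ b) (ht : 0 ≤ t) : f (a + t) - f a ≤ f (b + t) - f b := by
  rcases ht.eq_or_lt with rfl | ht
  · simp
  have hat : a + t ∈ s := hf.1.ordConnected.out ha hbt ⟨by linarith, by linarith⟩
  have hb : b ∈ s := hf.1.ordConnected.out ha hbt ⟨hab, by linarith⟩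
  have hslope : slope f a (a + t) ≤ slope f b (b + t) :=
    calc slope f a (a + t)
        ≤ slope f a (b + t) :=
          hf.slope_mono ha ⟨hat, (lt_add_of_pos_right a ht).ne'⟩ ⟨hbt, (by linarith : a < b + t).ne'⟩
            (by linarith)
      _ = slope f (b + t) a := slope_comm f a (b + t)
      _ ≤ slope f (b + t) b :=
          hf.slope_mono hbt ⟨ha, (by linarith : a < b + t).ne⟩ ⟨hb, (lt_add_of_pos_right b ht).ne⟩ hab
      _ = slope f b (b + t) := slope_comm f (b + t) b
  simp only [slope_def_field, add_sub_cancel_left] at hslope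
  exact (div_le_div_iff_of_pos_right ht).mp hslope

lemma Monotone.sub_le_sub_of_convexOn {f : ℝ → ℝ} (hmono : Monotone f)
    (hconv : ConvexOn ℝ univ f) {a a' b b' : ℝ} (hab' : a ≤ b') (hb' : b' ≤ b)
    (hgap : a' - a ≤ b - b') : f a' - f a ≤ f b - f b' := by
  have hshift := hconv.map_add_sub_map_le (mem_univ a) (mem_univ _) hab' (sub_nonneg.mpr hb')
  rw [add_sub_cancel] at hshift
  have hmono' : f a' ≤ f (a + (b - b')) := hmono (by linarith)
  linarith

theorem stmt13_general (v : ℝ → ℝ → ℝ) (c : ℝ → ℝ) (θi θj : ℝ)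
    (hC3 : ∀ s s', s ≤ s' →
      ereq v s θj - ereq v s θi ≤ ereq v s' θj - ereq v s' θi)
    (hgap0 : ∀ s, ereq v s θi ≤ ereq v s θj)
    (hcmono : Monotone c) (hcconv : ConvexOn ℝ Set.univ c)
    (ei ej vi vj : ℝ)
    (heia : ei = ereq v vi θi) (heja : ej = ereq v vj θj)
    (hlt : vi < vj)
    (htildej : ereq v vi θj ≤ ej) :
    ereq v vj θi - ei ≤ ej - ereq v vi θj ∧
    c (ereq v vj θi) - c ei ≤ c ej - c (ereq v vi θj) := by
  have hgap : ereq v vj θi - ei ≤ ej - ereq v vi θj := by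
    have := hC3 vi vj hlt.le
    rw [← heia, ← heja] at this
    linarith
  have hei : ei ≤ ereq v vi θj := heia ▸ hgap0 vi
  exact ⟨hgap, hcmono.sub_le_sub_of_convexOn hcconv hei htildej hgap⟩

/-- Effort-gap and cost comparison. Suppose `v` satisfies C3 for
the pair `θᵢ > θⱼ` (the map `s ↦ e_req(s;θⱼ) − e_req(s;θᵢ)` is weakly
nondecreasing, and the higher-capability model never needs more effort), `c`
is nondecreasing and convex, the equilibrium efforts satisfy
`eᵢ* = e_req(vᵢ*;θᵢ)`, `eⱼ* = e_req(vⱼ*;θⱼ)` with scores `vᵢ* < vⱼ*`, and the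
counterfactual efforts `ẽᵢ := e_req(vⱼ*;θᵢ)`, `ẽⱼ := e_req(vᵢ*;θⱼ)` satisfy
`ẽᵢ > eᵢ*` and `ẽⱼ ≤ eⱼ*`. Then `ẽᵢ − eᵢ* ≤ eⱼ* − ẽⱼ`, and consequently
`c(ẽᵢ) − c(eᵢ*) ≤ c(eⱼ*) − c(ẽⱼ)`. -/
theorem stmt13 (v : ℝ → ℝ → ℝ) (c : ℝ → ℝ) (θi θj : ℝ) (hθ : θj < θi)
    (hC3 : ∀ s s', s ≤ s' →
      ereq v s θj - ereq v s θi ≤ ereq v s' θj - ereq v s' θi)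
    (hgap0 : ∀ s, ereq v s θi ≤ ereq v s θj)
    (hcmono : Monotone c) (hcconv : ConvexOn ℝ Set.univ c)
    (ei ej vi vj : ℝ) (hei0 : 0 ≤ ei) (hej0 : 0 ≤ ej)
    (hvi : vi = v θi ei) (hvj : vj = v θj ej)
    (heia : ei = ereq v vi θi) (heja : ej = ereq v vj θj)
    (hlt : vi < vj)
    (htildei : ei < ereq v vj θi) (htildej : ereq v vi θj ≤ ej) :
    ereq v vj θi - ei ≤ ej - ereq v vi θj ∧
    c (ereq v vj θi) - c ei ≤ c ej - c (ereq v vi θj) :=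
  stmt13_general v c θi θj hC3 hgap0 hcmono hcconv ei ej vi vj heia heja hlt htildej
end
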